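/- arXiv:2407.00329 — 3 statements merged into one kernel-verified Lean document; each statement's English description precedes it below -/
import Mathlib

section
/- Consider the weighted interval coverage problem: segments S* on a line, each segment s* with positive weight w(s*), and sorted points p*_1 < p*_2 < ⋯ < p*_n. Define δ*_0 = 0 and for 1 ≤ i ≤ n define δ*_i as the minimum total weight of a subset of S* whose union covers {p*_1, …, p*_i} (δ*_i = ∞ if no such subset exists). For each segment s*, let f_{s*} be the largest index j ∈ {0,…,n} with p*_j strictly left of the left endpoint of s* (where p*_0 is left of all segments). Then for all 1 ≤ i ≤ n: δ*_i = min over segments s* covering p*_i of (w(s*) + δ*_{f_{s*}}). -/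
open scoped Classical ENNReal

/-- The minimum total weight of a subset of the segments `Set.Icc (a s) (b s)`,
`s ∈ S`, whose union covers the points `p 1, …, p i` (`∞` if infeasible). -/
noncomputable def deltaStar {ι : Type*} (S : Finset ι) (a b : ι → ℝ) (w : ι → ℝ)
    (p : ℕ → ℝ) (i : ℕ) : ℝ≥0∞ :=
  ⨅ (S' : Finset ι) (_ : S' ⊆ S ∧
      ∀ k, 1 ≤ k → k ≤ i → ∃ s ∈ S', p k ∈ Set.Icc (a s) (b s)),
    ∑ s ∈ S', ENNReal.ofReal (w s)

/-- Recurrence for the weighted interval coverage problem: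
`δ*_i = min_{s covering p*_i} (w(s) + δ*_{f_s})`, where `f_s` is the largest
index `j ≤ n` with `p*_j` strictly left of the left endpoint of `s`. -/
theorem deltaStar_recurrence {ι : Type*} (S : Finset ι) (a b : ι → ℝ)
    (w : ι → ℝ) (p : ℕ → ℝ) (n : ℕ)
    (hmono : StrictMonoOn p (Set.Icc 0 n))
    (hab : ∀ s ∈ S, a s ≤ b s)
    (hw : ∀ s ∈ S, 0 < w s)
    (hp0 : ∀ s ∈ S, p 0 < a s)
    (i : ℕ) (h1 : 1 ≤ i) (hn : i ≤ n) :
    deltaStar S a b w p i =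
      ⨅ (s : ι) (_ : s ∈ S ∧ p i ∈ Set.Icc (a s) (b s)),
        (ENNReal.ofReal (w s) +
          deltaStar S a b w p (Nat.findGreatest (fun j => p j < a s) n)) := by
  have hmonoLe : MonotoneOn p (Set.Icc (0:ℕ) n) := hmono.monotoneOn
  apply le_antisymm
  · refine le_iInf fun s => le_iInf fun hs => ?_
    obtain ⟨hsS, hpi⟩ := hs
    set m := Nat.findGreatest (fun j => p j < a s) n with hm
    have hmn : m ≤ n := Nat.findGreatest_le n
    -- for m < k ≤ n, a s ≤ p k
    have hB : ∀ k, m < k → k ≤ n → a s ≤ p k := by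
      intro k hk1 hk2
      by_contra h
      exact (Nat.findGreatest_is_greatest hk1 hk2) (lt_of_not_ge h)
    have key : ∀ S' : Finset ι, (S' ⊆ S ∧
        ∀ k, 1 ≤ k → k ≤ m → ∃ t ∈ S', p k ∈ Set.Icc (a t) (b t)) →
        deltaStar S a b w p i ≤ ENNReal.ofReal (w s) + ∑ t ∈ S', ENNReal.ofReal (w t) := by
      intro S' ⟨hsub, hcov⟩
      have hfeas : insert s S' ⊆ S ∧
          ∀ k, 1 ≤ k → k ≤ i → ∃ t ∈ insert s S', p k ∈ Set.Icc (a t) (b t) := by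
        constructor
        · exact Finset.insert_subset hsS hsub
        · intro k hk1 hki
          by_cases hkm : k ≤ m
          · obtain ⟨t, htS', hpt⟩ := hcov k hk1 hkm
            exact ⟨t, Finset.mem_insert_of_mem htS', hpt⟩
          · refine ⟨s, Finset.mem_insert_self _ _, ?_, ?_⟩
            · exact hB k (lt_of_not_ge hkm) (hki.trans hn)
            · calc p k ≤ p i := hmonoLe ⟨Nat.zero_le _, hki.trans hn⟩ ⟨Nat.zero_le _, hn⟩ hki
                _ ≤ b s := hpi.2
      calc deltaStar S a b w p i ≤ ∑ t ∈ insert s S', ENNReal.ofReal (w t) :=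
            iInf₂_le (insert s S') hfeas
        _ ≤ ENNReal.ofReal (w s) + ∑ t ∈ S', ENNReal.ofReal (w t) := by
            by_cases hss : s ∈ S'
            · rw [Finset.insert_eq_self.mpr hss]
              exact le_add_self
            · rw [Finset.sum_insert hss]
    conv_rhs => rw [deltaStar, ENNReal.add_iInf]
    refine le_iInf fun S' => ?_
    rw [ENNReal.add_iInf]
    exact le_iInf fun hS' => key S' hS'
  · rw [deltaStar]
    refine le_iInf fun S' => le_iInf fun hS' => ?_
    obtain ⟨hsub, hcov⟩ := hS'
    obtain ⟨s, hsS', hps⟩ := hcov i h1 le_rfl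
    set m := Nat.findGreatest (fun j => p j < a s) n with hm
    have hmn : m ≤ n := Nat.findGreatest_le n
    have hA : p m < a s := Nat.findGreatest_spec (P := fun j => p j < a s) (Nat.zero_le n) (hp0 s (hsub hsS'))
    have hmi : m < i := by
      by_contra h
      push_neg at h
      have : p i ≤ p m := hmonoLe ⟨Nat.zero_le _, hn⟩ ⟨Nat.zero_le _, hmn⟩ h
      exact absurd hps.1 (not_le.mpr (this.trans_lt hA))
    have h2 : deltaStar S a b w p m ≤ ∑ t ∈ S'.erase s, ENNReal.ofReal (w t) := by
      refine iInf₂_le _ ⟨(Finset.erase_subset _ _).trans hsub, ?_⟩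
      intro k hk1 hkm
      obtain ⟨t, htS', hpt⟩ := hcov k hk1 (hkm.trans hmi.le)
      have hpk : p k < a s :=
        lt_of_le_of_lt (hmonoLe ⟨Nat.zero_le _, (hkm.trans hmn)⟩ ⟨Nat.zero_le _, hmn⟩ hkm) hA
      have hts : t ≠ s := by
        intro h; subst h
        exact absurd hpt.1 (not_le.mpr hpk)
      exact ⟨t, Finset.mem_erase.mpr ⟨hts, htS'⟩, hpt⟩
    refine le_trans (iInf₂_le s ⟨hsub hsS', hps⟩) ?_
    calc ENNReal.ofReal (w s) + deltaStar S a b w p m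
        ≤ ENNReal.ofReal (w s) + ∑ t ∈ S'.erase s, ENNReal.ofReal (w t) :=
          add_le_add_right h2 _
      _ = ∑ t ∈ S', ENNReal.ofReal (w t) := Finset.add_sum_erase S' (fun t => ENNReal.ofReal (w t)) hsS'
end

section
/- Consider the dynamic program: cost(s) initialized to w(s) for each disk s ∈ S; for i = 1 to n, set δ_i = min_{s ∈ S, p_i ∈ s} cost(s), then for every disk s with p_i ∉ s reset cost(s) := w(s) + δ_i. Then for every i and every disk s covering p_i, at the start of iteration i we have cost(s) = w(s) + δ_j, where j is the largest index less than i such that p_j ∉ s (and δ_0 = 0, cost(s) = w(s) if s covers all of p_1,…,p_i). -/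
open scoped Classical

/-- One run of the dynamic program of Algorithm 1: `dp S w mem i` is the pair
`(cost function after iteration i, δ_i)`, where `mem i s` means that the point
`p_i` is covered by the disk `s`.  Initially every `cost(s) = w(s)` and
`δ_0 = 0`; at iteration `i` we set `δ_i = min_{s ∈ S, p_i ∈ s} cost(s)` and
then reset `cost(s) := w(s) + δ_i` for every disk `s` with `p_i ∉ s`. -/
noncomputable def dp {ι : Type*} (S : Finset ι) (w : ι → ℝ)
    (mem : ℕ → ι → Prop) : ℕ → (ι → ℝ) × ℝ
  | 0 => (w, 0)
  | (i + 1) =>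
    let c := (dp S w mem i).1
    let δ := sInf {x : ℝ | ∃ s ∈ S, mem (i + 1) s ∧ c s = x}
    (fun s => if mem (i + 1) s then c s else w s + δ, δ)

/-! The cost of `s` is reset to `w s + δ_j` exactly at the iterations `j` with `p_j ∉ s` and is
left unchanged otherwise, so after iteration `k` it equals `w s + δ_j` for the last such `j ≤ k`
(and `w s = w s + δ_0` if there is none). -/

section

variable {ι : Type*} (S : Finset ι) (w : ι → ℝ) (mem : ℕ → ι → Prop) {s : ι} {k : ℕ}

theorem dp_succ_fst_apply_of_mem (h : mem (k + 1) s) :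
    (dp S w mem (k + 1)).1 s = (dp S w mem k).1 s := by
  simp [dp, h]

theorem dp_succ_fst_apply_of_not_mem (h : ¬ mem (k + 1) s) :
    (dp S w mem (k + 1)).1 s = w s + (dp S w mem (k + 1)).2 := by
  simp [dp, h]

theorem dp_fst_apply_eq_add_snd_findGreatest (s : ι) (k : ℕ) :
    (dp S w mem k).1 s = w s + (dp S w mem (Nat.findGreatest (fun j => ¬ mem j s) k)).2 := by
  induction k with
  | zero => simp [dp]
  | succ k ih =>
    by_cases h : mem (k + 1) s
    · rw [dp_succ_fst_apply_of_mem S w mem h, ih, Nat.findGreatest_succ, if_neg (not_not.2 h)]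
    · rw [dp_succ_fst_apply_of_not_mem S w mem h, Nat.findGreatest_succ, if_pos h]

end

theorem dp_cost_invariant_general {ι : Type*} (S : Finset ι) (w : ι → ℝ)
    (mem : ℕ → ι → Prop)
    (i : ℕ)
    (s : ι) :
    (dp S w mem (i - 1)).1 s =
      w s + (dp S w mem (Nat.findGreatest (fun j => ¬ mem j s) (i - 1))).2 :=
  dp_fst_apply_eq_add_snd_findGreatest S w mem s (i - 1)

/-- At the start of iteration `i`, for every disk `s` covering `p_i`,
`cost(s) = w(s) + δ_j` where `j` is the largest index `< i` with `p_j ∉ s`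
(`j = 0`, so `δ_j = 0` and `cost(s) = w(s)`, if `s` covers all of
`p_1, …, p_i`). -/
theorem dp_cost_invariant {ι : Type*} (S : Finset ι) (w : ι → ℝ)
    (mem : ℕ → ι → Prop) (n : ℕ)
    (hw : ∀ s ∈ S, 0 < w s)
    (i : ℕ) (h1 : 1 ≤ i) (hn : i ≤ n)
    (s : ι) (hs : s ∈ S) (hcov : mem i s) :
    (dp S w mem (i - 1)).1 s =
      w s + (dp S w mem (Nat.findGreatest (fun j => ¬ mem j s) (i - 1))).2 :=
  dp_cost_invariant_general S w mem i s
end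

section
/- In the dynamic programming sweep for interval coverage, the following invariant is preserved: just after processing point p*_i, for every segment s* currently containing the sweep point, cost(s*) = w(s*) + δ*_{f_{s*}}, and δ*_j has been correctly computed for all j ≤ i. In particular, correctness of the sweep follows by induction: δ*_i = min_{s* ∋ p*_i} cost(s*) equals the true optimum for covering p*_1,…,p*_i. -/
open scoped Classical ENNReal

/-! Write `f s` for the last index whose point lies strictly left of `a s`. Any cover of
`p 1, …, p i` contains a segment `s ∋ p i`; the points `p 1, …, p (f s)` lie left of `a s`, so
the rest of the cover covers them, giving `δ i ≥ w s + δ (f s)`. Conversely, the points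
`p (f s + 1), …, p i` lie between `a s` and `p i ≤ b s`, so adding `s` to any cover of
`p 1, …, p (f s)` covers `p 1, …, p i`, giving `δ i ≤ w s + δ (f s)`. -/

namespace IntervalCover

open Set

variable {ι : Type*}

def Covers (a b : ι → ℝ) (p : ℕ → ℝ) (T : Finset ι) (i : ℕ) : Prop :=
  ∀ k, 1 ≤ k → k ≤ i → ∃ s ∈ T, p k ∈ Icc (a s) (b s)

theorem deltaStar_eq (S : Finset ι) (a b w : ι → ℝ) (p : ℕ → ℝ) (i : ℕ) :
    deltaStar S a b w p i =
      ⨅ (T : Finset ι) (_ : T ⊆ S ∧ Covers a b p T i), ∑ s ∈ T, ENNReal.ofReal (w s) :=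
  rfl

theorem Covers.insert {a b : ι → ℝ} {p : ℕ → ℝ} {T : Finset ι} {m i : ℕ} {s : ι}
    (hT : Covers a b p T m) (hs : ∀ k, m < k → k ≤ i → p k ∈ Icc (a s) (b s)) :
    Covers a b p (insert s T) i := by
  intro k hk1 hki
  rcases le_or_gt k m with hkm | hmk
  · obtain ⟨t, ht, hkt⟩ := hT k hk1 hkm
    exact ⟨t, Finset.mem_insert_of_mem ht, hkt⟩
  · exact ⟨s, Finset.mem_insert_self s T, hs k hmk hki⟩

theorem Covers.erase {a b : ι → ℝ} {p : ℕ → ℝ} {T : Finset ι} {m i : ℕ} {s : ι}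
    (hT : Covers a b p T i) (hmi : m ≤ i)
    (hs : ∀ k, 1 ≤ k → k ≤ m → p k ∉ Icc (a s) (b s)) :
    Covers a b p (T.erase s) m := by
  intro k hk1 hkm
  obtain ⟨t, ht, hkt⟩ := hT k hk1 (hkm.trans hmi)
  refine ⟨t, Finset.mem_erase.2 ⟨?_, ht⟩, hkt⟩
  rintro rfl
  exact hs k hk1 hkm hkt

section FindGreatest

variable {p : ℕ → ℝ} {n : ℕ} {x : ℝ}

theorem le_of_findGreatest_lt {k : ℕ} (hk : Nat.findGreatest (fun j => p j < x) n < k)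
    (hkn : k ≤ n) : x ≤ p k :=
  not_lt.1 (Nat.findGreatest_is_greatest hk hkn)

theorem lt_of_le_findGreatest (hp : MonotoneOn p (Icc 0 n)) {k : ℕ} (hk1 : 1 ≤ k)
    (hk : k ≤ Nat.findGreatest (fun j => p j < x) n) : p k < x :=
  have hf : p (Nat.findGreatest (fun j => p j < x) n) < x :=
    Nat.findGreatest_of_ne_zero rfl (Nat.one_le_iff_ne_zero.1 (hk1.trans hk))
  (hp ⟨k.zero_le, hk.trans (Nat.findGreatest_le n)⟩
    ⟨Nat.zero_le _, Nat.findGreatest_le n⟩ hk).trans_lt hf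

theorem findGreatest_lt (hp : MonotoneOn p (Icc 0 n)) {i : ℕ} (hi1 : 1 ≤ i)
    (hxi : x ≤ p i) : Nat.findGreatest (fun j => p j < x) n < i :=
  not_le.1 fun hi => (lt_of_le_findGreatest hp hi1 hi).not_ge hxi

end FindGreatest

variable {S : Finset ι} {a b w : ι → ℝ} {p : ℕ → ℝ} {n i : ℕ} {s : ι}

theorem deltaStar_le_add (hp : MonotoneOn p (Icc 0 n)) (hin : i ≤ n) (hsS : s ∈ S)
    (hs : p i ∈ Icc (a s) (b s)) :
    deltaStar S a b w p i ≤
      ENNReal.ofReal (w s) + deltaStar S a b w p (Nat.findGreatest (fun j => p j < a s) n) := by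
  rw [deltaStar_eq, deltaStar_eq, ENNReal.add_iInf]
  refine le_iInf fun T => ?_
  rw [ENNReal.add_iInf]
  refine le_iInf fun ⟨hTS, hT⟩ => ?_
  have hcover : Covers a b p (insert s T) i := hT.insert fun k hfk hki =>
    ⟨le_of_findGreatest_lt hfk (hki.trans hin),
      (hp ⟨k.zero_le, hki.trans hin⟩ ⟨i.zero_le, hin⟩ hki).trans hs.2⟩
  calc ⨅ (T' : Finset ι) (_ : T' ⊆ S ∧ Covers a b p T' i), ∑ t ∈ T', ENNReal.ofReal (w t)
      ≤ ∑ t ∈ insert s T, ENNReal.ofReal (w t) :=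
        iInf₂_le (insert s T) ⟨Finset.insert_subset hsS hTS, hcover⟩
    _ ≤ ENNReal.ofReal (w s) + ∑ t ∈ T, ENNReal.ofReal (w t) := by
        by_cases hsT : s ∈ T
        · rw [Finset.insert_eq_of_mem hsT]
          exact le_add_self
        · rw [Finset.sum_insert hsT]

theorem iInf_add_le_deltaStar (hp : MonotoneOn p (Icc 0 n)) (hi1 : 1 ≤ i) :
    ⨅ (s : ι) (_ : s ∈ S ∧ p i ∈ Icc (a s) (b s)),
        (ENNReal.ofReal (w s) + deltaStar S a b w p (Nat.findGreatest (fun j => p j < a s) n))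
      ≤ deltaStar S a b w p i := by
  rw [deltaStar_eq]
  refine le_iInf fun T => le_iInf fun ⟨hTS, hT⟩ => ?_
  obtain ⟨s, hsT, hs⟩ := hT i hi1 le_rfl
  have hfi := findGreatest_lt hp hi1 hs.1
  have hrest : Covers a b p (T.erase s) (Nat.findGreatest (fun j => p j < a s) n) :=
    hT.erase hfi.le fun k hk1 hkf hks =>
      (lt_of_le_findGreatest hp hk1 hkf).not_ge hks.1
  calc _ ≤ ENNReal.ofReal (w s) +
          deltaStar S a b w p (Nat.findGreatest (fun j => p j < a s) n) :=
        iInf₂_le s ⟨hTS hsT, hs⟩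
    _ ≤ ENNReal.ofReal (w s) + ∑ t ∈ T.erase s, ENNReal.ofReal (w t) :=
        add_le_add_right (iInf₂_le (T.erase s) ⟨(Finset.erase_subset s T).trans hTS, hrest⟩) _
    _ = ∑ t ∈ T, ENNReal.ofReal (w t) :=
        Finset.add_sum_erase T (fun t => ENNReal.ofReal (w t)) hsT

end IntervalCover

open IntervalCover in
theorem sweep_correct_general {ι : Type*} (S : Finset ι) (a b : ι → ℝ)
    (w : ι → ℝ) (p : ℕ → ℝ) (n : ℕ)
    (hmono : StrictMonoOn p (Set.Icc 0 n))
    (i : ℕ) (h1 : 1 ≤ i) (hn : i ≤ n) :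
    deltaStar S a b w p i =
      ⨅ (s : ι) (_ : s ∈ S ∧ p i ∈ Set.Icc (a s) (b s)),
        (ENNReal.ofReal (w s) +
          deltaStar S a b w p (Nat.findGreatest (fun j => p j < a s) n)) :=
  le_antisymm
    (le_iInf₂ fun _ ⟨hsS, hs⟩ => deltaStar_le_add hmono.monotoneOn hn hsS hs)
    (iInf_add_le_deltaStar hmono.monotoneOn h1)

/-- Correctness of the dynamic-programming sweep for weighted interval
coverage: with `p*_0` strictly left of every segment's left endpoint and every
point covered by at least one segment, for each `1 ≤ i ≤ n`,
`δ*_i = min_{s* ∋ p*_i} (w(s*) + δ*_{f_{s*}})` where `f_{s*}` is the largest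
index `j` with `p*_j` strictly left of the left endpoint of `s*`; i.e. the
cost maintained by the sweep, `cost(s*) = w(s*) + δ*_{f_{s*}}`, minimized over
the segments containing `p*_i`, equals the true optimum for covering
`p*_1, …, p*_i`. -/
theorem sweep_correct {ι : Type*} (S : Finset ι) (a b : ι → ℝ)
    (w : ι → ℝ) (p : ℕ → ℝ) (n : ℕ)
    (hmono : StrictMonoOn p (Set.Icc 0 n))
    (hab : ∀ s ∈ S, a s ≤ b s)
    (hw : ∀ s ∈ S, 0 < w s)
    (hp0 : ∀ s ∈ S, p 0 < a s)
    (hcov : ∀ i, 1 ≤ i → i ≤ n → ∃ s ∈ S, p i ∈ Set.Icc (a s) (b s))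
    (i : ℕ) (h1 : 1 ≤ i) (hn : i ≤ n) :
    deltaStar S a b w p i =
      ⨅ (s : ι) (_ : s ∈ S ∧ p i ∈ Set.Icc (a s) (b s)),
        (ENNReal.ofReal (w s) +
          deltaStar S a b w p (Nat.findGreatest (fun j => p j < a s) n)) :=
  sweep_correct_general S a b w p n hmono i h1 hn
end
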